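/- arXiv:0911.2863 — 2 statements merged into one kernel-verified Lean document; each statement's English description precedes it below -/
import Mathlib

section
/- Let F be a filter in an inverse monoid and set H = (F⁻¹F)↑. Then H is a filter that is an inverse submonoid, and F = (aH)↑ for any a ∈ F. -/
section Defs
variable {S : Type*}

/-- An idempotent element. -/
def IsIdem [Mul S] (e : S) : Prop := e * e = e

/-- The natural partial order on an inverse semigroup: `s ≤ t` iff `s = t * e`
for some idempotent `e`. -/
def nle [Mul S] (s t : S) : Prop := ∃ e : S, IsIdem e ∧ s = t * e

/-- `m` is the meet (greatest lower bound) of `s` and `t` for the natural partial order. -/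
def IsMeet [Mul S] (s t m : S) : Prop :=
  nle m s ∧ nle m t ∧ ∀ u : S, nle u s → nle u t → nle u m

/-- `j` is the join (least upper bound) of `s` and `t` for the natural partial order. -/
def IsJoin [Mul S] (s t j : S) : Prop :=
  nle s j ∧ nle t j ∧ ∀ u : S, nle s u → nle t u → nle j u

/-- Compatible elements: `s⁻¹ * t` and `s * t⁻¹` are idempotents. -/
def Compatible [Mul S] [Inv S] (s t : S) : Prop :=
  IsIdem (s⁻¹ * t) ∧ IsIdem (s * t⁻¹)

/-- Orthogonal elements: `s⁻¹ * t = 0` and `s * t⁻¹ = 0`. -/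
def Orthogonal [Mul S] [Inv S] [Zero S] (s t : S) : Prop :=
  s⁻¹ * t = 0 ∧ s * t⁻¹ = 0

/-- A filter: a nonempty, upwardly closed, down-directed subset. -/
def IsFilter' [Mul S] (F : Set S) : Prop :=
  F.Nonempty ∧ (∀ s t : S, s ∈ F → nle s t → t ∈ F) ∧
    (∀ s t : S, s ∈ F → t ∈ F → ∃ u ∈ F, nle u s ∧ nle u t)

/-- A proper filter: a filter not containing `0`. -/
def IsProperFilter [Mul S] [Zero S] (F : Set S) : Prop :=
  IsFilter' F ∧ (0 : S) ∉ F

/-- An ultrafilter: a proper filter maximal among proper filters. -/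
def IsUltrafilter' [Mul S] [Zero S] (F : Set S) : Prop :=
  IsProperFilter F ∧ ∀ G : Set S, IsProperFilter G → F ⊆ G → G = F

/-- Upward closure of a subset with respect to the natural partial order. -/
def upClosure [Mul S] (X : Set S) : Set S := {s | ∃ x ∈ X, nle x s}

end Defs

/-- An inverse semigroup: every element `a` has a unique inverse `a⁻¹`. -/
class InverseSemigroup (S : Type*) extends Semigroup S, Inv S where
  mul_inv_mul : ∀ a : S, a * a⁻¹ * a = a
  inv_mul_inv : ∀ a : S, a⁻¹ * a * a⁻¹ = a⁻¹
  inv_unique : ∀ a b : S, a * b * a = a → b * a * b = b → b = a⁻¹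

/-- An inverse monoid: an inverse semigroup with an identity. -/
class InverseMonoid (S : Type*) extends Monoid S, Inv S where
  mul_inv_mul : ∀ a : S, a * a⁻¹ * a = a
  inv_mul_inv : ∀ a : S, a⁻¹ * a * a⁻¹ = a⁻¹
  inv_unique : ∀ a b : S, a * b * a = a → b * a * b = b → b = a⁻¹

/-- A boolean inverse monoid: an inverse monoid with zero such that
(BM1) the idempotents form a boolean algebra under the natural partial order,
(BM2) the natural partial order is a meet semilattice, and
(BM3) orthogonal pairs of elements have joins. -/
class BooleanInverseMonoid (S : Type*) extends Monoid S, Inv S, Zero S where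
  zero_mul : ∀ a : S, 0 * a = 0
  mul_zero : ∀ a : S, a * 0 = 0
  mul_inv_mul : ∀ a : S, a * a⁻¹ * a = a
  inv_mul_inv : ∀ a : S, a⁻¹ * a * a⁻¹ = a⁻¹
  inv_unique : ∀ a b : S, a * b * a = a → b * a * b = b → b = a⁻¹
  meet_exists : ∀ s t : S, ∃ m : S, IsMeet s t m
  idem_join : ∀ e f : S, IsIdem e → IsIdem f → ∃ g : S, IsIdem g ∧ IsJoin e f g
  idem_compl : ∀ e : S, IsIdem e → ∃ e' : S, IsIdem e' ∧ e * e' = 0 ∧ IsJoin e e' 1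
  idem_distrib : ∀ e f g j : S, IsIdem e → IsIdem f → IsIdem g → IsJoin f g j →
    IsJoin (e * f) (e * g) (e * j)
  orthogonal_join : ∀ s t : S, s⁻¹ * t = 0 → s * t⁻¹ = 0 → ∃ j : S, IsJoin s t j

section Aux
variable {S : Type*} [InverseMonoid S]

lemma mii (a : S) : a * a⁻¹ * a = a := InverseMonoid.mul_inv_mul a
lemma imi (a : S) : a⁻¹ * a * a⁻¹ = a⁻¹ := InverseMonoid.inv_mul_inv a

lemma inv_inv' (a : S) : (a⁻¹)⁻¹ = a :=
  (InverseMonoid.inv_unique a⁻¹ a (imi a) (mii a)).symm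

lemma idem_inv_mul (a : S) : IsIdem (a⁻¹ * a) := by
  show a⁻¹ * a * (a⁻¹ * a) = a⁻¹ * a
  calc a⁻¹ * a * (a⁻¹ * a) = a⁻¹ * a * a⁻¹ * a := by simp only [mul_assoc]
    _ = a⁻¹ * a := by rw [imi]

lemma idem_mul_inv (a : S) : IsIdem (a * a⁻¹) := by
  have := idem_inv_mul (a⁻¹); rwa [inv_inv'] at this

lemma idem_inv {e : S} (he : IsIdem e) : e⁻¹ = e := by
  have h : e * e * e = e := by rw [he, he]
  exact (InverseMonoid.inv_unique e e h h).symm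

lemma idem_mul_idem {e f : S} (he : IsIdem e) (hf : IsIdem f) : IsIdem (e * f) := by
  set b := (e * f)⁻¹ with hb
  have h1 : (e * f) * (f * b * e) * (e * f) = e * f := by
    have : (e * f) * (f * b * e) * (e * f) = e * (f * f) * b * (e * e) * f := by
      simp only [mul_assoc]
    rw [this, hf, he]
    have : e * f * b * e * f = e * f * b * (e * f) := by simp only [mul_assoc]
    rw [this, mii]
  have h2 : (f * b * e) * (e * f) * (f * b * e) = f * b * e := by
    have : (f * b * e) * (e * f) * (f * b * e) = f * (b * ((e * e) * (f * f)) * b) * e := by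
      simp only [mul_assoc]
    rw [this, he, hf]
    have : b * (e * f) * b = b := by rw [hb]; exact imi (e * f)
    rw [show f * (b * (e * f) * b) * e = f * (b * (e * f) * b) * e from rfl]
    rw [show b * (e * f) * b = b * (e * f) * b from rfl]
    rw [this]
  have hbe : f * b * e = b := InverseMonoid.inv_unique (e * f) (f * b * e) h1 h2
  have key : (f * b * e) * (f * b * e) = f * b * e := by
    have h4 : (f * b * e) * (f * b * e) = f * (b * (e * f) * b) * e := by
      simp only [mul_assoc]
    rw [h4, hb, imi]
  have hbidem : IsIdem b := by
    show b * b = b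
    rw [← hbe]; exact key
  have h3 : b⁻¹ = b := idem_inv hbidem
  have hef : e * f = b := by
    rw [hb] at h3 ⊢
    rw [inv_inv'] at h3
    exact h3
  show e * f * (e * f) = e * f
  rw [hef]; exact hbidem

lemma idem_comm {e f : S} (he : IsIdem e) (hf : IsIdem f) : e * f = f * e := by
  have hef := idem_mul_idem he hf
  have hfe := idem_mul_idem hf he
  have h1 : (e * f) * (f * e) * (e * f) = e * f := by
    have : (e * f) * (f * e) * (e * f) = e * (f * f) * (e * e) * f := by
      simp only [mul_assoc]
    rw [this, hf, he]
    have : e * f * e * f = (e * f) * (e * f) := by simp only [mul_assoc]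
    rw [this, hef]
  have h2 : (f * e) * (e * f) * (f * e) = f * e := by
    have : (f * e) * (e * f) * (f * e) = f * (e * e) * (f * f) * e := by
      simp only [mul_assoc]
    rw [this, he, hf]
    have : f * e * f * e = (f * e) * (f * e) := by simp only [mul_assoc]
    rw [this, hfe]
  have := InverseMonoid.inv_unique (e * f) (f * e) h1 h2
  rw [idem_inv hef] at this
  exact this.symm

lemma mul_inv_rev' (a b : S) : (a * b)⁻¹ = b⁻¹ * a⁻¹ := by
  have h1 : (a * b) * (b⁻¹ * a⁻¹) * (a * b) = a * b := by
    have : (a * b) * (b⁻¹ * a⁻¹) * (a * b) = a * ((b * b⁻¹) * (a⁻¹ * a)) * b := by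
      simp only [mul_assoc]
    rw [this, idem_comm (idem_mul_inv b) (idem_inv_mul a)]
    have : a * (a⁻¹ * a * (b * b⁻¹)) * b = (a * a⁻¹ * a) * (b * b⁻¹ * b) := by
      simp only [mul_assoc]
    rw [this, mii, mii]
  have h2 : (b⁻¹ * a⁻¹) * (a * b) * (b⁻¹ * a⁻¹) = b⁻¹ * a⁻¹ := by
    have : (b⁻¹ * a⁻¹) * (a * b) * (b⁻¹ * a⁻¹) = b⁻¹ * ((a⁻¹ * a) * (b * b⁻¹)) * a⁻¹ := by
      simp only [mul_assoc]
    rw [this, idem_comm (idem_inv_mul a) (idem_mul_inv b)]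
    have : b⁻¹ * (b * b⁻¹ * (a⁻¹ * a)) * a⁻¹ = (b⁻¹ * b * b⁻¹) * (a⁻¹ * a * a⁻¹) := by
      simp only [mul_assoc]
    rw [this, imi, imi]
  exact (InverseMonoid.inv_unique (a * b) (b⁻¹ * a⁻¹) h1 h2).symm

lemma idem_conj {e : S} (he : IsIdem e) (a : S) : IsIdem (a⁻¹ * e * a) := by
  show (a⁻¹ * e * a) * (a⁻¹ * e * a) = a⁻¹ * e * a
  have : (a⁻¹ * e * a) * (a⁻¹ * e * a) = a⁻¹ * (e * (a * a⁻¹)) * (e * a) := by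
    simp only [mul_assoc]
  rw [this, idem_comm he (idem_mul_inv a)]
  have : a⁻¹ * (a * a⁻¹ * e) * (e * a) = (a⁻¹ * a * a⁻¹) * ((e * e) * a) := by
    simp only [mul_assoc]
  rw [this, imi, he, mul_assoc]

lemma nle_refl (s : S) : nle s s :=
  ⟨s⁻¹ * s, idem_inv_mul s, by rw [← mul_assoc, mii]⟩

lemma nle_trans {s t u : S} (h1 : nle s t) (h2 : nle t u) : nle s u := by
  obtain ⟨e, he, hse⟩ := h1
  obtain ⟨f, hf, htf⟩ := h2
  exact ⟨f * e, idem_mul_idem hf he, by rw [hse, htf, mul_assoc]⟩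

lemma nle_left_iff {s t : S} : nle s t ↔ ∃ f : S, IsIdem f ∧ s = f * t := by
  constructor
  · rintro ⟨e, he, rfl⟩
    refine ⟨t * e * t⁻¹, ?_, ?_⟩
    · show (t * e * t⁻¹) * (t * e * t⁻¹) = t * e * t⁻¹
      have : (t * e * t⁻¹) * (t * e * t⁻¹) = t * (e * (t⁻¹ * t)) * (e * t⁻¹) := by
        simp only [mul_assoc]
      rw [this, idem_comm he (idem_inv_mul t)]
      have : t * (t⁻¹ * t * e) * (e * t⁻¹) = (t * t⁻¹ * t) * ((e * e) * t⁻¹) := by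
        simp only [mul_assoc]
      rw [this, mii, he, mul_assoc]
    · have : t * e * t⁻¹ * t = t * (e * (t⁻¹ * t)) := by simp only [mul_assoc]
      rw [this, idem_comm he (idem_inv_mul t), ← mul_assoc, ← mul_assoc, mii]
  · rintro ⟨f, hf, rfl⟩
    refine ⟨t⁻¹ * f * t, idem_conj hf t, ?_⟩
    have : t * (t⁻¹ * f * t) = t * t⁻¹ * f * t := by simp only [mul_assoc]
    rw [this, idem_comm (idem_mul_inv t) hf]
    rw [show f * (t * t⁻¹) * t = f * (t * t⁻¹ * t) by simp only [mul_assoc], mii]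

lemma nle_mul {s t u v : S} (h1 : nle s t) (h2 : nle u v) : nle (s * u) (t * v) := by
  obtain ⟨f, hf, rfl⟩ := nle_left_iff.mp h1
  obtain ⟨e, he, rfl⟩ := h2
  have step1 : nle (f * t * (v * e)) (t * (v * e)) := nle_left_iff.mpr ⟨f, hf, by simp only [mul_assoc]⟩
  have step2 : nle (t * (v * e)) (t * v) := ⟨e, he, by rw [mul_assoc]⟩
  exact nle_trans (by rw [show f * t * (v * e) = f * t * (v * e) from rfl]; exact step1) step2

lemma nle_inv {s t : S} (h : nle s t) : nle s⁻¹ t⁻¹ := by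
  obtain ⟨e, he, rfl⟩ := h
  exact nle_left_iff.mpr ⟨e, he, by rw [mul_inv_rev', idem_inv he]⟩

lemma nle_idem_mul {e : S} (he : IsIdem e) (s : S) : nle (e * s) s :=
  nle_left_iff.mpr ⟨e, he, rfl⟩

end Aux

open Pointwise in
lemma mem_H_iff {S : Type*} [InverseMonoid S] (F : Set S) (s : S) :
    s ∈ upClosure (F⁻¹ * F) ↔ ∃ a ∈ F, ∃ b ∈ F, nle (a⁻¹ * b) s := by
  constructor
  · rintro ⟨x, hx, hxs⟩
    obtain ⟨p, hp, q, hq, rfl⟩ := hx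
    exact ⟨p⁻¹, Set.mem_inv.mp hp, q, hq, by rwa [inv_inv']⟩
  · rintro ⟨a, ha, b, hb, h⟩
    exact ⟨a⁻¹ * b, ⟨a⁻¹, Set.mem_inv.mpr (by rwa [inv_inv']), b, hb, rfl⟩, h⟩

lemma filter_directed4 {S : Type*} [InverseMonoid S] {F : Set S} (hF : IsFilter' F)
    {a b c d : S} (ha : a ∈ F) (hb : b ∈ F) (hc : c ∈ F) (hd : d ∈ F) :
    ∃ v ∈ F, nle v a ∧ nle v b ∧ nle v c ∧ nle v d := by
  obtain ⟨-, -, hdir⟩ := hF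
  obtain ⟨u, hu, hua, hub⟩ := hdir a b ha hb
  obtain ⟨w, hw, hwc, hwd⟩ := hdir c d hc hd
  obtain ⟨v, hv, hvu, hvw⟩ := hdir u w hu hw
  exact ⟨v, hv, nle_trans hvu hua, nle_trans hvu hub, nle_trans hvw hwc, nle_trans hvw hwd⟩

open Pointwise in
theorem stmt14 {S : Type*} [InverseMonoid S] (F : Set S) (hF : IsFilter' F) :
    IsFilter' (upClosure (F⁻¹ * F)) ∧ (1 : S) ∈ upClosure (F⁻¹ * F) ∧
    (∀ a ∈ upClosure (F⁻¹ * F), ∀ b ∈ upClosure (F⁻¹ * F), a * b ∈ upClosure (F⁻¹ * F)) ∧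
    (∀ a ∈ upClosure (F⁻¹ * F), a⁻¹ ∈ upClosure (F⁻¹ * F)) ∧
    ∀ a ∈ F, F = upClosure (({a} : Set S) * upClosure (F⁻¹ * F)) := by
  obtain ⟨hne, hup, hdir⟩ := hF
  have hF' : IsFilter' F := ⟨hne, hup, hdir⟩
  refine ⟨⟨?_, ?_, ?_⟩, ?_, ?_, ?_, ?_⟩
  · -- nonempty
    obtain ⟨a, ha⟩ := hne
    exact ⟨a⁻¹ * a, (mem_H_iff F _).mpr ⟨a, ha, a, ha, nle_refl _⟩⟩
  · -- up-closed
    rintro s t ⟨x, hx, hxs⟩ hst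
    exact ⟨x, hx, nle_trans hxs hst⟩
  · -- down-directed
    intro s t hs ht
    obtain ⟨a, ha, b, hb, habs⟩ := (mem_H_iff F s).mp hs
    obtain ⟨c, hc, d, hd, hcdt⟩ := (mem_H_iff F t).mp ht
    obtain ⟨v, hv, hva, hvb, hvc, hvd⟩ := filter_directed4 hF' ha hb hc hd
    refine ⟨v⁻¹ * v, (mem_H_iff F _).mpr ⟨v, hv, v, hv, nle_refl _⟩, ?_, ?_⟩
    · exact nle_trans (nle_mul (nle_inv hva) hvb) habs
    · exact nle_trans (nle_mul (nle_inv hvc) hvd) hcdt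
  · -- 1 ∈ H
    obtain ⟨a, ha⟩ := hne
    exact (mem_H_iff F 1).mpr ⟨a, ha, a, ha, ⟨a⁻¹ * a, idem_inv_mul a, (one_mul _).symm⟩⟩
  · -- closed under multiplication
    intro s hs t ht
    obtain ⟨a, ha, b, hb, habs⟩ := (mem_H_iff F s).mp hs
    obtain ⟨c, hc, d, hd, hcdt⟩ := (mem_H_iff F t).mp ht
    obtain ⟨v, hv, hva, hvb, hvc, hvd⟩ := filter_directed4 hF' ha hb hc hd
    refine (mem_H_iff F _).mpr ⟨v, hv, v, hv, ?_⟩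
    have h1 : nle (v⁻¹ * v * (v⁻¹ * v)) (a⁻¹ * b * (c⁻¹ * d)) :=
      nle_mul (nle_mul (nle_inv hva) hvb) (nle_mul (nle_inv hvc) hvd)
    rw [idem_inv_mul v] at h1
    exact nle_trans h1 (nle_mul habs hcdt)
  · -- closed under inverses
    intro s hs
    obtain ⟨a, ha, b, hb, habs⟩ := (mem_H_iff F s).mp hs
    refine (mem_H_iff F _).mpr ⟨b, hb, a, ha, ?_⟩
    have := nle_inv habs
    rwa [mul_inv_rev', inv_inv'] at this
  · -- F = (aH)↑
    intro a ha
    ext s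
    constructor
    · intro hs
      refine ⟨a * (a⁻¹ * s), ⟨a, rfl, a⁻¹ * s,
        (mem_H_iff F _).mpr ⟨a, ha, s, hs, nle_refl _⟩, rfl⟩, ?_⟩
      have h1 := nle_idem_mul (idem_mul_inv a) s
      rwa [mul_assoc] at h1
    · rintro ⟨y, hy, hys⟩
      obtain ⟨p, hp, h, hh, rfl⟩ := hy
      rw [Set.mem_singleton_iff] at hp
      subst hp
      obtain ⟨b, hb, c, hc, hbch⟩ := (mem_H_iff F h).mp hh
      obtain ⟨v, hv, hva, hvb, hvc, -⟩ := filter_directed4 hF' ha hb hc ha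
      have h1 : nle (v * (v⁻¹ * v)) (p * (b⁻¹ * c)) :=
        nle_mul hva (nle_mul (nle_inv hvb) hvc)
      rw [← mul_assoc, mii] at h1
      exact hup v s hv (nle_trans h1 (nle_trans (nle_mul (nle_refl p) hbch) hys))
end

section
/- Let A be an ultrafilter in a boolean inverse monoid S. If the join s ∨ t exists and s ∨ t ∈ A, then s ∈ A or t ∈ A. -/
namespace BIMAux

variable {S : Type*} [BooleanInverseMonoid S]

lemma mim (a : S) : a * a⁻¹ * a = a := BooleanInverseMonoid.mul_inv_mul a
lemma imi (a : S) : a⁻¹ * a * a⁻¹ = a⁻¹ := BooleanInverseMonoid.inv_mul_inv a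

lemma inv_inv' (a : S) : a⁻¹⁻¹ = a :=
  (BooleanInverseMonoid.inv_unique a⁻¹ a (imi a) (mim a)).symm

lemma idem_inv {e : S} (he : IsIdem e) : e⁻¹ = e :=
  (BooleanInverseMonoid.inv_unique e e (by rw [he, he]) (by rw [he, he])).symm

lemma idem_cancel {e : S} (he : IsIdem e) (x : S) : e * (e * x) = e * x := by
  rw [← mul_assoc, he]

lemma comm_cancel {a b : S} (h : a * b = b * a) (x : S) :
    a * (b * x) = b * (a * x) := by
  rw [← mul_assoc, h, mul_assoc]

lemma mul_inv_mul' (t x : S) : t * (t⁻¹ * (t * x)) = t * x := by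
  rw [← mul_assoc, ← mul_assoc, BooleanInverseMonoid.mul_inv_mul]

lemma mul_inv_mul'' (t : S) : t * (t⁻¹ * t) = t := by
  rw [← mul_assoc, BooleanInverseMonoid.mul_inv_mul]

lemma idem_inv_mul (a : S) : IsIdem (a⁻¹ * a) := by
  show a⁻¹ * a * (a⁻¹ * a) = a⁻¹ * a
  rw [← mul_assoc, imi]

lemma idem_mul_inv (a : S) : IsIdem (a * a⁻¹) := by
  show a * a⁻¹ * (a * a⁻¹) = a * a⁻¹
  rw [← mul_assoc, mim]

lemma idem_mul {e f : S} (he : IsIdem e) (hf : IsIdem f) : IsIdem (e * f) := by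
  have h1 : e * (f * ((e * f)⁻¹ * (e * f))) = e * f := by
    simpa only [mul_assoc] using mim (e * f)
  have h2 : (e * f)⁻¹ * (e * (f * (e * f)⁻¹)) = (e * f)⁻¹ := by
    simpa only [mul_assoc] using imi (e * f)
  generalize hx : (e * f)⁻¹ = x at h1 h2
  have h2e : x * (e * (f * (x * e))) = x * e := by
    have := congrArg (· * e) h2
    simpa only [mul_assoc] using this
  have key : f * x * e = x := by
    conv_rhs => rw [← hx]
    exact BooleanInverseMonoid.inv_unique (e * f) (f * x * e)
      (by show e * f * (f * x * e) * (e * f) = e * f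
          simp only [mul_assoc, idem_cancel he, idem_cancel hf]
          exact h1)
      (by show f * x * e * (e * f) * (f * x * e) = f * x * e
          simp only [mul_assoc, idem_cancel he, idem_cancel hf]
          rw [h2e, ← mul_assoc])
  have hxx : IsIdem x := by
    show x * x = x
    conv_lhs => rw [← key]
    rw [show f * x * e * (f * x * e) = f * (x * (e * (f * (x * e)))) by
      simp only [mul_assoc]]
    rw [h2e, ← mul_assoc, key]
  have hef : e * f = x := by rw [← inv_inv' (e * f), hx, idem_inv hxx]
  rw [hef]; exact hxx

lemma idem_comm {e f : S} (he : IsIdem e) (hf : IsIdem f) : e * f = f * e := by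
  have hef := idem_mul he hf
  have hfe := idem_mul hf he
  have hef' : e * f * (e * f) = e * f := hef
  have hfe' : f * e * (f * e) = f * e := hfe
  have key : f * e = (e * f)⁻¹ := by
    apply BooleanInverseMonoid.inv_unique
    · show e * f * (f * e) * (e * f) = e * f
      simp only [mul_assoc, idem_cancel he, idem_cancel hf]
      simpa only [mul_assoc] using hef'
    · show f * e * (e * f) * (f * e) = f * e
      simp only [mul_assoc, idem_cancel he, idem_cancel hf]
      simpa only [mul_assoc] using hfe'
  rw [key, idem_inv hef]

lemma mul_inv_rev' (a b : S) : (a * b)⁻¹ = b⁻¹ * a⁻¹ := by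
  symm
  apply BooleanInverseMonoid.inv_unique
  · show a * b * (b⁻¹ * a⁻¹) * (a * b) = a * b
    calc a * b * (b⁻¹ * a⁻¹) * (a * b)
        = a * ((b * b⁻¹) * ((a⁻¹ * a) * b)) := by simp only [mul_assoc]
      _ = a * ((a⁻¹ * a) * ((b * b⁻¹) * b)) := by
          rw [comm_cancel (idem_comm (idem_mul_inv b) (idem_inv_mul a)) b]
      _ = a * (a⁻¹ * a) * (b * b⁻¹ * b) := by simp only [mul_assoc]
      _ = a * b := by rw [mul_inv_mul'', mim]
  · show b⁻¹ * a⁻¹ * (a * b) * (b⁻¹ * a⁻¹) = b⁻¹ * a⁻¹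
    calc b⁻¹ * a⁻¹ * (a * b) * (b⁻¹ * a⁻¹)
        = b⁻¹ * ((a⁻¹ * a) * ((b * b⁻¹) * a⁻¹)) := by simp only [mul_assoc]
      _ = b⁻¹ * ((b * b⁻¹) * ((a⁻¹ * a) * a⁻¹)) := by
          rw [comm_cancel (idem_comm (idem_inv_mul a) (idem_mul_inv b)) a⁻¹]
      _ = (b⁻¹ * b * b⁻¹) * (a⁻¹ * a * a⁻¹) := by simp only [mul_assoc]
      _ = b⁻¹ * a⁻¹ := by rw [imi, imi]

lemma nle_refl (s : S) : nle s s := ⟨1, by simp [IsIdem], (mul_one s).symm⟩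

lemma nle_trans {s t u : S} (h1 : nle s t) (h2 : nle t u) : nle s u := by
  obtain ⟨e, he, rfl⟩ := h1
  obtain ⟨f, hf, rfl⟩ := h2
  exact ⟨f * e, idem_mul hf he, by rw [mul_assoc]⟩

lemma nle_zero {s : S} (h : nle s 0) : s = 0 := by
  obtain ⟨e, _, rfl⟩ := h
  exact BooleanInverseMonoid.zero_mul e

lemma nle_eq_mul_inv {s t : S} (h : nle s t) : s = t * (s⁻¹ * s) := by
  obtain ⟨e, he, rfl⟩ := h
  rw [mul_inv_rev', idem_inv he, mul_assoc e t⁻¹, ← mul_assoc t⁻¹ t e,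
    comm_cancel (idem_comm he (idem_inv_mul t)) e, he,
    mul_assoc t⁻¹ t e, mul_inv_mul']

lemma nle_inv_mul {x y : S} (h : nle x y) : x⁻¹ * x = (y⁻¹ * y) * (x⁻¹ * x) := by
  obtain ⟨e, he, rfl⟩ := h
  have hxe : (y * e)⁻¹ * (y * e) = (y⁻¹ * y) * e := by
    rw [mul_inv_rev', idem_inv he, mul_assoc, ← mul_assoc y⁻¹ y e,
      comm_cancel (idem_comm he (idem_inv_mul y)) e, he]
  rw [hxe]
  exact (idem_cancel (idem_inv_mul y) e).symm

lemma nle_antisymm {x y : S} (h1 : nle x y) (h2 : nle y x) : x = y := by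
  have e1 := nle_inv_mul h1
  have e2 := nle_inv_mul h2
  have heq : x⁻¹ * x = y⁻¹ * y := by
    rw [e1, idem_comm (idem_inv_mul y) (idem_inv_mul x), ← e2]
  have h3 := nle_eq_mul_inv h1
  rw [h3, heq, mul_inv_mul'']

lemma nle_mul_right {d : S} (e : S) (he : IsIdem e) : nle (d * e) d := ⟨e, he, rfl⟩

/-- If `s ∉ A` for an ultrafilter `A`, some `a ∈ A` satisfies `IsMeet a s 0`. -/
lemma zero_meet {A : Set S} (hA : IsUltrafilter' A) {s : S} (hs : s ∉ A) :
    ∃ a ∈ A, IsMeet a s 0 := by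
  obtain ⟨⟨⟨hne, hup, hdir⟩, h0A⟩, hmax⟩ := hA
  set G : Set S := {u | ∃ a ∈ A, ∃ m, IsMeet a s m ∧ nle m u} with hG
  obtain ⟨a0, ha0⟩ := hne
  have hsub : A ⊆ G := by
    intro a ha
    obtain ⟨m, hm⟩ := BooleanInverseMonoid.meet_exists a s
    exact ⟨a, ha, m, hm, hm.1⟩
  have hsG : s ∈ G := by
    obtain ⟨m, hm⟩ := BooleanInverseMonoid.meet_exists a0 s
    exact ⟨a0, ha0, m, hm, hm.2.1⟩
  by_cases h0 : (0 : S) ∈ G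
  · obtain ⟨a, ha, m, hm, hm0⟩ := h0
    have : m = 0 := nle_zero hm0
    rw [this] at hm
    exact ⟨a, ha, hm⟩
  · exfalso
    have hGfilter : IsProperFilter G := by
      refine ⟨⟨⟨s, hsG⟩, ?_, ?_⟩, h0⟩
      · rintro u v ⟨a, ha, m, hm, hmu⟩ huv
        exact ⟨a, ha, m, hm, nle_trans hmu huv⟩
      · rintro u v ⟨a, ha, m, hm, hmu⟩ ⟨b, hb, n, hn, hnv⟩
        obtain ⟨c, hc, hca, hcb⟩ := hdir a b ha hb
        obtain ⟨p, hp⟩ := BooleanInverseMonoid.meet_exists c s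
        refine ⟨p, ⟨c, hc, p, hp, nle_refl p⟩, ?_, ?_⟩
        · exact nle_trans (hm.2.2 p (nle_trans hp.1 hca) hp.2.1) hmu
        · exact nle_trans (hn.2.2 p (nle_trans hp.1 hcb) hp.2.1) hnv
    have := hmax G hGfilter hsub
    rw [this] at hsG
    exact hs hsG

end BIMAux

theorem stmt16 {S : Type*} [BooleanInverseMonoid S] (A : Set S)
    (hA : IsUltrafilter' A) (s t j : S) (hj : IsJoin s t j) (h : j ∈ A) :
    s ∈ A ∨ t ∈ A := by
  classical
  by_contra hcon
  push_neg at hcon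
  obtain ⟨hs, ht⟩ := hcon
  obtain ⟨a, ha, hma⟩ := BIMAux.zero_meet hA hs
  obtain ⟨b, hb, hmb⟩ := BIMAux.zero_meet hA ht
  obtain ⟨⟨⟨hne, hup, hdir⟩, h0A⟩, hmax⟩ := hA
  obtain ⟨c, hc, hca, hcb⟩ := hdir a b ha hb
  obtain ⟨d, hd, hdc, hdj⟩ := hdir c j hc h
  obtain ⟨es, hes⟩ : ∃ es : S, es = s⁻¹ * s := ⟨_, rfl⟩
  obtain ⟨et, het⟩ : ∃ et : S, et = t⁻¹ * t := ⟨_, rfl⟩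
  obtain ⟨ed, hed⟩ : ∃ ed : S, ed = d⁻¹ * d := ⟨_, rfl⟩
  have hies : IsIdem es := hes ▸ BIMAux.idem_inv_mul s
  have hiet : IsIdem et := het ▸ BIMAux.idem_inv_mul t
  have hied : IsIdem ed := hed ▸ BIMAux.idem_inv_mul d
  have hies' : es * es = es := hies
  have hiet' : et * et = et := hiet
  have hsJ : s = j * es := by rw [hes]; exact BIMAux.nle_eq_mul_inv hj.1
  have htJ : t = j * et := by rw [het]; exact BIMAux.nle_eq_mul_inv hj.2.1
  have hdJ : d = j * ed := by rw [hed]; exact BIMAux.nle_eq_mul_inv hdj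
  have hcomm_des : ed * es = es * ed := BIMAux.idem_comm hied hies
  have hcomm_det : ed * et = et * ed := BIMAux.idem_comm hied hiet
  -- d * es ≤ s and d * es ≤ a, hence d * es = 0
  have key1 : es * (ed * es) = ed * es := by
    rw [← mul_assoc es ed es, ← hcomm_des, mul_assoc ed es es, hies']
  have hdes_le_s : nle (d * es) s := by
    refine ⟨ed * es, BIMAux.idem_mul hied hies, ?_⟩
    rw [hsJ, mul_assoc j es (ed * es), key1, hdJ, mul_assoc j ed es]
  have hdes_le_a : nle (d * es) a :=
    BIMAux.nle_trans (BIMAux.nle_mul_right es hies)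
      (BIMAux.nle_trans hdc hca)
  have hdes0 : d * es = 0 := BIMAux.nle_zero (hma.2.2 _ hdes_le_a hdes_le_s)
  have hedes0 : ed * es = 0 := by
    rw [hed, mul_assoc d⁻¹ d es, hdes0, BooleanInverseMonoid.mul_zero]
  -- same for t
  have key2 : et * (ed * et) = ed * et := by
    rw [← mul_assoc et ed et, ← hcomm_det, mul_assoc ed et et, hiet']
  have hdet_le_t : nle (d * et) t := by
    refine ⟨ed * et, BIMAux.idem_mul hied hiet, ?_⟩
    rw [htJ, mul_assoc j et (ed * et), key2, hdJ, mul_assoc j ed et]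
  have hdet_le_b : nle (d * et) b :=
    BIMAux.nle_trans (BIMAux.nle_mul_right et hiet)
      (BIMAux.nle_trans hdc hcb)
  have hdet0 : d * et = 0 := BIMAux.nle_zero (hmb.2.2 _ hdet_le_b hdet_le_t)
  have hedet0 : ed * et = 0 := by
    rw [hed, mul_assoc d⁻¹ d et, hdet0, BooleanInverseMonoid.mul_zero]
  -- the boolean join g of es and et satisfies ed * g = ed
  obtain ⟨g, hig, hgJoin⟩ := BooleanInverseMonoid.idem_join es et hies hiet
  have hjg : j = j * g := by
    apply BIMAux.nle_antisymm
    · apply hj.2.2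
      · obtain ⟨w, hw, hsw⟩ := hgJoin.1
        exact ⟨w, hw, by rw [hsJ, hsw, ← mul_assoc]⟩
      · obtain ⟨w, hw, htw⟩ := hgJoin.2.1
        exact ⟨w, hw, by rw [htJ, htw, ← mul_assoc]⟩
    · exact BIMAux.nle_mul_right g hig
  have hedej : ed = (j⁻¹ * j) * ed := by
    have h2 := BIMAux.nle_inv_mul hdj
    rw [← hed] at h2
    exact h2
  have h1 : ed * (j⁻¹ * j) = ed := by
    rw [BIMAux.idem_comm hied (BIMAux.idem_inv_mul j)]
    exact hedej.symm
  have hej : j⁻¹ * j * g = j⁻¹ * j := by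
    rw [mul_assoc, ← hjg]
  have hedg : ed * g = ed := by
    rw [← h1, mul_assoc ed (j⁻¹ * j) g, hej]
  -- distributivity gives IsJoin 0 0 ed, hence ed = 0 and d = 0
  have hdist := BooleanInverseMonoid.idem_distrib ed es et g hied hies hiet hgJoin
  rw [hedes0, hedet0, hedg] at hdist
  have hed0 : ed = 0 :=
    BIMAux.nle_zero (hdist.2.2 0 (BIMAux.nle_refl 0) (BIMAux.nle_refl 0))
  have hd0 : d = 0 := by rw [hdJ, hed0, BooleanInverseMonoid.mul_zero]
  rw [hd0] at hd
  exact h0A hd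
end
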